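/- With the initial ratio θ_0 chosen adaptively, the AdaBB stepsizes satisfy: (a) if i ∈ I_2 then α_i ≥ 1/L; (b) if i+1 ∈ I_3 then α_i ≥ 2/L and α_i + α_{i+1} ≥ (4+√2)/(2L); (c) if i ∈ I_1 ∪ I_2 and i+1 ∈ I_1 then α_{i+1} ≥ 1/L; (d) if i ∈ I_3 then α_{i−1} + α_i + α_{i+1} ≥ (2+√2)/L. -/

import Mathlib

open scoped RealInnerProductSpace
open Finset Filter

noncomputable section

/-- The general AdaBB iteration (Algorithm 2 of the paper) for a convex differentiable
function `f : ℝⁿ → ℝ` that attains its minimum.  `f'` is the gradient of `f`,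
`x` the iterates, `α` the stepsizes, `θ` the stepsize ratios and `lam` the short BB stepsizes. -/
structure AdaBB (n : ℕ) where
  f : EuclideanSpace ℝ (Fin n) → ℝ
  f' : EuclideanSpace ℝ (Fin n) → EuclideanSpace ℝ (Fin n)
  x : ℕ → EuclideanSpace ℝ (Fin n)
  α : ℕ → ℝ
  θ : ℕ → ℝ
  lam : ℕ → ℝ
  hconv : ConvexOn ℝ Set.univ f
  hgrad : ∀ y, HasGradientAt f (f' y) y
  hmin : ∃ z, ∀ y, f z ≤ f y
  hα0 : 0 < α 0
  hθ0 : 0 ≤ θ 0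
  hx1 : x 1 = x 0 - α 0 • f' (x 0)
  hne : ∀ k, f' (x (k + 1)) ≠ f' (x k)
  hlam : ∀ k, lam (k + 1) =
    ⟪f' (x (k + 1)) - f' (x k), x (k + 1) - x k⟫ / ‖f' (x (k + 1)) - f' (x k)‖ ^ 2
  hlampos : ∀ k, 0 < lam (k + 1)
  hcase1 : ∀ k, α k ≤ lam (k + 1) →
    α (k + 1) = Real.sqrt (1 + θ k) * α k ∧ θ (k + 1) = α (k + 1) / α k
  hcase2 : ∀ k, α k / 2 < lam (k + 1) → lam (k + 1) < α k →
    (α (k + 1) = min (Real.sqrt (lam (k + 1) / (2 * (α k - lam (k + 1)))))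
        (Real.sqrt ((1 + θ k) * lam (k + 1) / (2 * lam (k + 1) - α k))) * α k ∨
      α (k + 1) = lam (k + 1)) ∧
    θ (k + 1) = 2 * α (k + 1) / α k - α (k + 1) / lam (k + 1)
  hcase3 : ∀ k, lam (k + 1) ≤ α k / 2 →
    (α (k + 1) = Real.sqrt (α k / (2 * (α k - lam (k + 1)))) * lam (k + 1) ∨
      α (k + 1) = lam (k + 1) / Real.sqrt 2) ∧
    θ (k + 1) = α (k + 1) / α k
  hstep : ∀ k, x (k + 2) = x (k + 1) - α (k + 1) • f' (x (k + 1))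

namespace AdaBB

variable {n : ℕ}

/-- `M_k` (for `k ≥ 1`). -/
def M (S : AdaBB n) (k : ℕ) : ℝ :=
  if S.α (k - 1) ≤ S.lam k then 0
  else if S.α (k - 1) / 2 < S.lam k then
    S.α k ^ 2 / (S.lam k * S.α (k - 1)) - S.α k ^ 2 / S.α (k - 1) ^ 2
  else S.α k ^ 2 / S.lam k ^ 2 - S.α k ^ 2 / (S.α (k - 1) * S.lam k)

/-- `P_k` for `k ≥ 1`. -/
def Paux (S : AdaBB n) (k : ℕ) : ℝ :=
  if S.α (k - 1) ≤ S.lam k then S.α k ^ 2 / S.α (k - 1)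
  else if S.α (k - 1) / 2 < S.lam k then
    2 * S.α k ^ 2 / S.α (k - 1) - S.α k ^ 2 / S.lam k
  else S.α k ^ 2 / S.α (k - 1)

/-- `P_k`, with the convention `P_0 = P_1 - α_0`. -/
def P (S : AdaBB n) (k : ℕ) : ℝ :=
  if k = 0 then S.Paux 1 - S.α 0 else S.Paux k

/-- `w_k = α_k + P_k - P_{k+1}`. -/
def w (S : AdaBB n) (k : ℕ) : ℝ := S.α k + S.P k - S.P (k + 1)

/-- The Lyapunov function `Υ_k` (for `k ≥ 1`), relative to a minimizer `xs` of `f`. -/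
def Upsilon (S : AdaBB n) (xs : EuclideanSpace ℝ (Fin n)) (k : ℕ) : ℝ :=
  ‖S.x k - xs‖ ^ 2 + 2 * S.M k * ‖S.x k - S.x (k - 1)‖ ^ 2 +
    (2 * S.α (k - 1) + 2 * S.P (k - 1)) * (S.f (S.x (k - 1)) - S.f xs)

end AdaBB

end

/-!
Along the iteration the Lyapunov function `Υ_k` is nonincreasing. Expanding `‖x^{k+1} - x*‖²`
and using the gradient inequality at `x^k` (towards `x*` and towards `x^{k-1}`), the decrease
reduces to a scalar inequality in `‖∇f(x^{k-1})‖²`, `⟪∇f(x^{k-1}), d⟫` and `‖d‖²`, where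
`d = ∇f(x^k) - ∇f(x^{k-1})`; the definition of `λ_k` links the last two, and the step-size rules
are exactly what makes `M_{k+1} ≤ 1/2` and `P_{k+1} ≤ α_k + P_k`. Since `Υ_1 ≤ R²`, every
iterate lies in `B(x*, R)`, where cocoercivity gives `λ_k ≥ 1/L`.

The step-size bounds then follow case by case from the rules. For (c) one propagates
`1/L² ≤ 2 (1 + θ_k) α_k²`: it holds at `k = 0` by the choice of `θ_0`, and it is preserved
because in Case (i) `(1 + θ_{k+1}) α_{k+1}² ≥ 2 (1 + θ_k) α_k²`, as `θ_{k+1} = √(1 + θ_k) ≥ 1`.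
-/

theorem ConvexOn.add_fderiv_sub_le {E : Type*} [NormedAddCommGroup E] [NormedSpace ℝ E]
    {s : Set E} {f : E → ℝ} {f' : E →L[ℝ] ℝ} {x y : E}
    (hf : ConvexOn ℝ s f) (hx : x ∈ s) (hy : y ∈ s) (hf' : HasFDerivAt f f' x) :
    f x + f' (y - x) ≤ f y := by
  have hd : HasDerivAt (f ∘ AffineMap.lineMap x y) (f' (y - x)) (0 : ℝ) :=
    hf'.comp_hasDerivAt_of_eq 0 (AffineMap.hasDerivAt_lineMap (a := x) (b := y)) (by simp)
  have := (hf.comp_affineMap (AffineMap.lineMap x y)).le_slope_of_hasDerivAt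
    (by simpa using hx) (by simpa using hy) zero_lt_one hd
  rw [slope_def_field] at this
  simp only [Function.comp_apply, AffineMap.lineMap_apply_zero, AffineMap.lineMap_apply_one,
    sub_zero, div_one] at this
  linarith

theorem ConvexOn.add_inner_gradient_sub_le {E : Type*} [NormedAddCommGroup E]
    [InnerProductSpace ℝ E] [CompleteSpace E] {s : Set E} {f : E → ℝ} {g x y : E}
    (hf : ConvexOn ℝ s f) (hx : x ∈ s) (hy : y ∈ s) (hg : HasGradientAt f g x) :
    f x + ⟪g, y - x⟫ ≤ f y := by
  simpa using hf.add_fderiv_sub_le hx hy hg.hasFDerivAt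

namespace AdaBB

open Real

variable {n : ℕ} (S : AdaBB n)

theorem α_pos_and_θ_nonneg (k : ℕ) : 0 < S.α k ∧ 0 ≤ S.θ k := by
  induction k with
  | zero => exact ⟨S.hα0, S.hθ0⟩
  | succ k ih =>
    obtain ⟨hβ, hθ⟩ := ih
    have hl := S.hlampos k
    rcases le_or_gt (S.α k) (S.lam (k + 1)) with h1 | h1
    · obtain ⟨ha, hθ'⟩ := S.hcase1 k h1
      have : 0 < S.α (k + 1) := ha ▸ by positivity
      exact ⟨this, hθ' ▸ by positivity⟩
    rcases le_or_gt (S.lam (k + 1)) (S.α k / 2) with h3 | h2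
    · obtain ⟨ha, hθ'⟩ := S.hcase3 k h3
      have : 0 < S.α (k + 1) := by
        rcases ha with ha | ha <;> rw [ha]
        · exact mul_pos (sqrt_pos.2 (div_pos hβ (by linarith))) hl
        · positivity
      exact ⟨this, hθ' ▸ by positivity⟩
    · obtain ⟨ha, hθ'⟩ := S.hcase2 k h2 h1
      have : 0 < S.α (k + 1) := by
        rcases ha with ha | ha <;> rw [ha]
        · exact mul_pos (lt_min (sqrt_pos.2 (div_pos hl (by linarith)))
            (sqrt_pos.2 (div_pos (by positivity) (by linarith)))) hβ
        · exact hl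
      refine ⟨this, ?_⟩
      rw [hθ', sub_nonneg, div_le_div_iff₀ hl hβ]
      nlinarith

theorem α_pos (k : ℕ) : 0 < S.α k := (S.α_pos_and_θ_nonneg k).1

theorem θ_nonneg (k : ℕ) : 0 ≤ S.θ k := (S.α_pos_and_θ_nonneg k).2

theorem α_succ_sq_of_I1 {k : ℕ} (h1 : S.α k ≤ S.lam (k + 1)) :
    S.α (k + 1) ^ 2 = (1 + S.θ k) * S.α k ^ 2 := by
  rw [(S.hcase1 k h1).1, mul_pow, sq_sqrt (by linarith [S.θ_nonneg k])]

theorem α_le_α_succ_of_I1 {k : ℕ} (h1 : S.α k ≤ S.lam (k + 1)) : S.α k ≤ S.α (k + 1) := by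
  rw [(S.hcase1 k h1).1]
  exact le_mul_of_one_le_left (S.α_pos k).le (one_le_sqrt.2 (by linarith [S.θ_nonneg k]))

theorem two_mul_one_add_θ_mul_sq_le_of_I1 {k : ℕ} (h1 : S.α k ≤ S.lam (k + 1)) :
    2 * ((1 + S.θ k) * S.α k ^ 2) ≤ (1 + S.θ (k + 1)) * S.α (k + 1) ^ 2 := by
  obtain ⟨ha, hθ⟩ := S.hcase1 k h1
  have hθ' : 1 ≤ S.θ (k + 1) := by
    rw [hθ, ha, mul_div_cancel_right₀ _ (S.α_pos k).ne']
    exact one_le_sqrt.2 (by linarith [S.θ_nonneg k])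
  have hθk := S.θ_nonneg k
  rw [S.α_succ_sq_of_I1 h1]
  nlinarith [show 0 ≤ (1 + S.θ k) * S.α k ^ 2 by positivity]

theorem lam_le_α_succ_of_I2 {k : ℕ} (h2 : S.α k / 2 < S.lam (k + 1))
    (h1 : S.lam (k + 1) < S.α k) : S.lam (k + 1) ≤ S.α (k + 1) := by
  have hl := S.hlampos k
  have hβ := S.α_pos k
  have hθ := S.θ_nonneg k
  rcases (S.hcase2 k h2 h1).1 with ha | ha
  · rw [ha, ← div_le_iff₀ hβ]
    refine le_min ?_ ?_ <;>
      rw [le_sqrt' (by positivity), div_pow, div_le_div_iff₀ (by positivity) (by linarith)]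
    · nlinarith [sq_nonneg (S.α k - S.lam (k + 1))]
    · nlinarith [mul_nonneg (mul_nonneg hθ hl.le) (sq_nonneg (S.α k)),
        mul_pos hl (mul_pos (sub_pos.2 h1) (by linarith : 0 < S.α k + 2 * S.lam (k + 1)))]
  · exact ha.ge

theorem lam_div_sqrt_two_le_α_succ {k : ℕ} (h : S.lam (k + 1) < S.α k) :
    S.lam (k + 1) / √2 ≤ S.α (k + 1) := by
  have hl := S.hlampos k
  rcases le_or_gt (S.lam (k + 1)) (S.α k / 2) with h3 | h2
  · rcases (S.hcase3 k h3).1 with ha | ha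
    · rw [ha, div_eq_inv_mul, ← sqrt_inv]
      gcongr
      rw [le_div_iff₀ (by linarith)]
      linarith
    · exact ha.ge
  · exact (div_le_self hl.le (one_le_sqrt.2 one_le_two)).trans (S.lam_le_α_succ_of_I2 h2 h)

theorem α_succ_sq_le_of_I2 {k : ℕ} (h2 : S.α k / 2 < S.lam (k + 1))
    (h1 : S.lam (k + 1) < S.α k) :
    2 * (S.α k - S.lam (k + 1)) * S.α (k + 1) ^ 2 ≤ S.lam (k + 1) * S.α k ^ 2 ∧
      (2 * S.lam (k + 1) - S.α k) * S.α (k + 1) ^ 2 ≤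
        (1 + S.θ k) * S.lam (k + 1) * S.α k ^ 2 := by
  have hl := S.hlampos k
  have hβ := S.α_pos k
  have hθ := S.θ_nonneg k
  rcases (S.hcase2 k h2 h1).1 with ha | ha
  · have hsq {u : ℝ} (hu : 0 ≤ u) (h : S.α (k + 1) ≤ √u * S.α k) :
        S.α (k + 1) ^ 2 ≤ u * S.α k ^ 2 := by
      rw [← sq_sqrt hu, ← mul_pow]
      exact pow_le_pow_left₀ (S.α_pos _).le h 2
    have hle₁ := hsq (div_nonneg hl.le (by linarith))
      (ha.trans_le (mul_le_mul_of_nonneg_right (min_le_left _ _) hβ.le))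
    have hle₂ := hsq (div_nonneg (by positivity) (by linarith))
      (ha.trans_le (mul_le_mul_of_nonneg_right (min_le_right _ _) hβ.le))
    rw [div_mul_eq_mul_div, le_div_iff₀' (by linarith)] at hle₁ hle₂
    constructor <;> linarith
  · rw [ha]
    constructor
    · nlinarith [sq_nonneg (S.α k - 2 * S.lam (k + 1))]
    · nlinarith [mul_nonneg (mul_nonneg hθ hl.le) (sq_nonneg (S.α k)),
        mul_pos hl (mul_pos (sub_pos.2 h1) (by linarith : 0 < S.α k + 2 * S.lam (k + 1)))]

theorem α_succ_sq_le_of_I3 {k : ℕ} (h3 : S.lam (k + 1) ≤ S.α k / 2) :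
    2 * (S.α k - S.lam (k + 1)) * S.α (k + 1) ^ 2 ≤ S.α k * S.lam (k + 1) ^ 2 := by
  have hβ := S.α_pos k
  have hd : 0 < S.α k - S.lam (k + 1) := by linarith [S.hlampos k]
  rcases (S.hcase3 k h3).1 with ha | ha
  · rw [ha, mul_pow, sq_sqrt (div_nonneg hβ.le (by linarith))]
    exact le_of_eq (by field_simp)
  · rw [ha, div_pow, sq_sqrt zero_le_two]
    nlinarith [S.hlampos k, sq_nonneg (S.lam (k + 1))]

theorem M_succ_nonneg (k : ℕ) : 0 ≤ S.M (k + 1) := by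
  have hl := S.hlampos k
  have hβ := S.α_pos k
  simp only [M, Nat.add_sub_cancel]
  split_ifs
  · rfl
  all_goals
    rw [sub_nonneg]
    gcongr
    nlinarith

theorem M_succ_le_half (k : ℕ) : S.M (k + 1) ≤ 1 / 2 := by
  have hl := S.hlampos k
  have hβ := S.α_pos k
  simp only [M, Nat.add_sub_cancel]
  split_ifs with h1 h2
  · norm_num
  · have := (S.α_succ_sq_le_of_I2 h2 (not_le.1 h1)).1
    rw [div_sub_div _ _ (by positivity) (by positivity), div_le_iff₀ (by positivity)]
    nlinarith
  · have := S.α_succ_sq_le_of_I3 (not_lt.1 h2)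
    rw [div_sub_div _ _ (by positivity) (by positivity), div_le_iff₀ (by positivity)]
    nlinarith

theorem P_succ_eq (k : ℕ) : S.P (k + 1) = S.θ (k + 1) * S.α (k + 1) := by
  have hl := S.hlampos k
  have hβ := S.α_pos k
  simp only [P, Paux, Nat.add_sub_cancel, Nat.succ_ne_zero, if_false]
  split_ifs with h1 h2
  · rw [(S.hcase1 k h1).2]; field_simp
  · rw [(S.hcase2 k h2 (not_le.1 h1)).2]; field_simp
  · rw [(S.hcase3 k (not_lt.1 h2)).2]; field_simp

theorem P_succ_nonneg (k : ℕ) : 0 ≤ S.P (k + 1) := by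
  rw [P_succ_eq]
  exact mul_nonneg (S.θ_nonneg _) (S.α_pos _).le

theorem P_succ_le_α_mul (k : ℕ) : S.P (k + 1) ≤ S.α k * (1 + S.θ k) := by
  have hl := S.hlampos k
  have hβ := S.α_pos k
  have hθ := S.θ_nonneg k
  simp only [P, Paux, Nat.add_sub_cancel, Nat.succ_ne_zero, if_false]
  split_ifs with h1 h2
  · rw [div_le_iff₀ hβ, S.α_succ_sq_of_I1 h1]
    exact le_of_eq (by ring)
  · have := (S.α_succ_sq_le_of_I2 h2 (not_le.1 h1)).2
    rw [div_sub_div _ _ (by positivity) (by positivity), div_le_iff₀ (by positivity)]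
    nlinarith
  · have h3 := S.α_succ_sq_le_of_I3 (not_lt.1 h2)
    have : S.α k * S.α (k + 1) ^ 2 ≤ S.α k * S.lam (k + 1) ^ 2 := by
      nlinarith [sq_nonneg (S.α (k + 1))]
    have : S.α (k + 1) ^ 2 ≤ S.α k ^ 2 := by
      nlinarith [le_of_mul_le_mul_left this hβ]
    rw [div_le_iff₀ hβ]
    nlinarith

theorem P_succ_le (k : ℕ) : S.P (k + 1) ≤ S.α k + S.P k := by
  cases k with
  | zero => simp [P]
  | succ k =>
    rw [S.P_succ_eq k]
    linarith [S.P_succ_le_α_mul (k + 1)]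

theorem x_succ (k : ℕ) : S.x (k + 1) = S.x k - S.α k • S.f' (S.x k) := by
  cases k with
  | zero => exact S.hx1
  | succ k => exact S.hstep k

theorem norm_x_succ_sub_sq (k : ℕ) :
    ‖S.x (k + 1) - S.x k‖ ^ 2 = S.α k ^ 2 * ‖S.f' (S.x k)‖ ^ 2 := by
  rw [x_succ, sub_sub_cancel_left, norm_neg, norm_smul, mul_pow, Real.norm_eq_abs, sq_abs]

theorem f_add_inner_le (y z : EuclideanSpace ℝ (Fin n)) : S.f y + ⟪S.f' y, z - y⟫ ≤ S.f z :=
  S.hconv.add_inner_gradient_sub_le (Set.mem_univ _) (Set.mem_univ _) (S.hgrad y)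

theorem norm_x_succ_sub_sq_add_le (z : EuclideanSpace ℝ (Fin n)) (k : ℕ) :
    ‖S.x (k + 1) - z‖ ^ 2 + 2 * S.α k * (S.f (S.x k) - S.f z) ≤
      ‖S.x k - z‖ ^ 2 + S.α k ^ 2 * ‖S.f' (S.x k)‖ ^ 2 := by
  have hf := S.f_add_inner_le (S.x k) z
  rw [← neg_sub, inner_neg_right] at hf
  rw [x_succ, sub_right_comm, norm_sub_sq_real, inner_smul_right, norm_smul, mul_pow,
    Real.norm_eq_abs, sq_abs, real_inner_comm]
  nlinarith [S.α_pos k]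

theorem f_succ_add_le (k : ℕ) :
    S.f (S.x (k + 1)) + S.α k * ⟪S.f' (S.x (k + 1)), S.f' (S.x k)⟫ ≤ S.f (S.x k) := by
  have hf := S.f_add_inner_le (S.x (k + 1)) (S.x k)
  rwa [show S.x k - S.x (k + 1) = S.α k • S.f' (S.x k) by rw [x_succ, sub_sub_cancel],
    inner_smul_right] at hf

theorem lam_mul_norm_sq (k : ℕ) :
    S.lam (k + 1) * ‖S.f' (S.x (k + 1)) - S.f' (S.x k)‖ ^ 2 =
      -(S.α k * ⟪S.f' (S.x (k + 1)) - S.f' (S.x k), S.f' (S.x k)⟫) := by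
  have hd : ‖S.f' (S.x (k + 1)) - S.f' (S.x k)‖ ^ 2 ≠ 0 := by
    simpa [sub_eq_zero] using S.hne k
  rw [S.hlam k, div_mul_cancel₀ _ hd, x_succ, sub_sub_cancel_left, inner_neg_right,
    inner_smul_right]

theorem lam_sq_mul_le (k : ℕ) :
    S.lam (k + 1) ^ 2 * ‖S.f' (S.x (k + 1)) - S.f' (S.x k)‖ ^ 2 ≤
      S.α k ^ 2 * ‖S.f' (S.x k)‖ ^ 2 := by
  set g := S.f' (S.x k)
  set d := S.f' (S.x (k + 1)) - g
  have hd : 0 < ‖d‖ := norm_pos_iff.2 (sub_ne_zero.2 (S.hne k))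
  have : S.lam (k + 1) * ‖d‖ ≤ S.α k * ‖g‖ := by
    refine le_of_mul_le_mul_right ?_ hd
    calc S.lam (k + 1) * ‖d‖ * ‖d‖ = S.α k * -⟪d, g⟫ := by
          rw [mul_assoc, ← sq, S.lam_mul_norm_sq k, mul_neg]
      _ ≤ S.α k * (‖d‖ * ‖g‖) := by
          gcongr
          · exact (S.α_pos k).le
          · exact (neg_le_abs _).trans (abs_real_inner_le_norm _ _)
      _ = S.α k * ‖g‖ * ‖d‖ := by ring
  rw [← mul_pow, ← mul_pow]
  exact pow_le_pow_left₀ (mul_nonneg (S.hlampos k).le hd.le) this 2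

/-- Write `g = ∇f(x^k)`, `d = ∇f(x^{k+1}) - g`, `A = ‖g‖²`, `c = ⟪g, d⟫` and `t = ‖d‖²`, so that
`λ_{k+1} t = -α_k c`. The three branches then reduce to `(α_k - λ_{k+1}) t ≤ 0`, to an identity,
and to Cauchy–Schwarz `λ_{k+1}² t ≤ α_k² A`. -/
theorem α_sq_mul_norm_sq_sub_P_mul_inner_le (k : ℕ) :
    S.α (k + 1) ^ 2 * ‖S.f' (S.x (k + 1))‖ ^ 2 -
        S.P (k + 1) * (S.α k * ⟪S.f' (S.x (k + 1)), S.f' (S.x k)⟫) ≤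
      S.M (k + 1) * (S.α k ^ 2 * ‖S.f' (S.x k)‖ ^ 2) := by
  have hid := S.lam_mul_norm_sq k
  have hcs := S.lam_sq_mul_le k
  have hl := S.hlampos k
  have hβ := S.α_pos k
  set g := S.f' (S.x k)
  set d := S.f' (S.x (k + 1)) - g
  rw [show S.f' (S.x (k + 1)) = g + d by simp [d], norm_add_sq_real, inner_add_left,
    real_inner_self_eq_norm_sq, real_inner_comm g d]
  rw [real_inner_comm] at hid
  have ht := sq_nonneg ‖d‖
  have ha := sq_nonneg (S.α (k + 1))
  simp only [M, P, Paux, Nat.add_sub_cancel, Nat.succ_ne_zero, if_false]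
  generalize ‖g‖ ^ 2 = A, ⟪g, d⟫ = c, ‖d‖ ^ 2 = t, S.α (k + 1) ^ 2 = a at *
  generalize S.α k = β, S.lam (k + 1) = l at *
  split_ifs with h1 h2
  · have : c + t ≤ 0 := by nlinarith
    field_simp
    nlinarith [mul_nonpos_of_nonneg_of_nonpos ha this]
  · field_simp
    linear_combination a * hid
  · have heq : l ^ 2 * β * (c + t) = l ^ 2 * (β - l) * t := by
      linear_combination l ^ 2 * hid
    have := mul_le_mul_of_nonneg_left hcs (mul_nonneg ha (by linarith : 0 ≤ β - l))
    field_simp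
    refine le_of_mul_le_mul_left ?_ hβ
    linear_combination this + a * heq

section Lyapunov

variable {xs : EuclideanSpace ℝ (Fin n)}

theorem upsilon_succ_succ_le (hxs : ∀ y, S.f xs ≤ S.f y) (k : ℕ) :
    S.Upsilon xs (k + 2) ≤ S.Upsilon xs (k + 1) := by
  simp only [Upsilon, Nat.add_sub_cancel, show k + 2 - 1 = k + 1 from rfl,
    norm_x_succ_sub_sq]
  have hstep := S.norm_x_succ_sub_sq_add_le xs (k + 1)
  have hM := mul_le_mul_of_nonneg_right (S.M_succ_le_half (k + 1))
    (by positivity : 0 ≤ S.α (k + 1) ^ 2 * ‖S.f' (S.x (k + 1))‖ ^ 2)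
  have hf := mul_le_mul_of_nonneg_left (S.f_succ_add_le k) (S.P_succ_nonneg k)
  have hP := mul_le_mul_of_nonneg_right (S.P_succ_le k) (sub_nonneg.2 (hxs (S.x k)))
  nlinarith [S.α_sq_mul_norm_sq_sub_P_mul_inner_le k]

theorem norm_x_succ_sub_sq_le_upsilon (hxs : ∀ y, S.f xs ≤ S.f y) (k : ℕ) :
    ‖S.x (k + 1) - xs‖ ^ 2 ≤ S.Upsilon xs (k + 1) := by
  simp only [Upsilon, Nat.add_sub_cancel]
  have := mul_nonneg (S.M_succ_nonneg k) (sq_nonneg ‖S.x (k + 1) - S.x k‖)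
  have := mul_nonneg ((S.P_succ_nonneg k).trans (S.P_succ_le k)) (sub_nonneg.2 (hxs (S.x k)))
  linarith

theorem upsilon_one_le (hxs : ∀ y, S.f xs ≤ S.f y) :
    S.Upsilon xs 1 ≤ ‖S.x 0 - xs‖ ^ 2 + S.α 0 ^ 2 * (1 + 2 * S.M 1) * ‖S.f' (S.x 0)‖ ^ 2 +
      max (2 * S.P 1 - 2 * S.α 0) 0 * (S.f (S.x 0) - S.f xs) := by
  have hP : S.P 0 = S.P 1 - S.α 0 := by simp [P]
  simp only [Upsilon, Nat.sub_self, S.norm_x_succ_sub_sq 0, hP]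
  have := mul_le_mul_of_nonneg_right (le_max_left (2 * S.P 1 - 2 * S.α 0) 0)
    (sub_nonneg.2 (hxs (S.x 0)))
  nlinarith [S.norm_x_succ_sub_sq_add_le xs 0]

theorem norm_x_sub_le (hxs : ∀ y, S.f xs ≤ S.f y) {R : ℝ} (hR0 : 0 ≤ R)
    (hR2 : R ^ 2 = ‖S.x 0 - xs‖ ^ 2 + S.α 0 ^ 2 * (1 + 2 * S.M 1) * ‖S.f' (S.x 0)‖ ^ 2 +
      max (2 * S.P 1 - 2 * S.α 0) 0 * (S.f (S.x 0) - S.f xs)) (k : ℕ) :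
    ‖S.x k - xs‖ ≤ R := by
  refine le_of_pow_le_pow_left₀ two_ne_zero hR0 ?_
  cases k with
  | zero =>
    have := mul_nonneg (le_max_right (2 * S.P 1 - 2 * S.α 0) 0) (sub_nonneg.2 (hxs (S.x 0)))
    have : 0 ≤ S.α 0 ^ 2 * (1 + 2 * S.M 1) * ‖S.f' (S.x 0)‖ ^ 2 := by
      have := S.M_succ_nonneg 0
      positivity
    linarith
  | succ k =>
    refine (S.norm_x_succ_sub_sq_le_upsilon hxs k).trans ?_
    induction k with
    | zero => exact hR2 ▸ S.upsilon_one_le hxs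
    | succ k ih => exact (S.upsilon_succ_succ_le hxs k).trans ih

end Lyapunov

theorem one_div_le_lam {L : ℝ} {k : ℕ}
    (h : 1 / L * ‖S.f' (S.x (k + 1)) - S.f' (S.x k)‖ ^ 2 ≤
      ⟪S.f' (S.x (k + 1)) - S.f' (S.x k), S.x (k + 1) - S.x k⟫) :
    1 / L ≤ S.lam (k + 1) := by
  rwa [S.hlam k, le_div_iff₀ (pow_pos (norm_pos_iff.2 (sub_ne_zero.2 (S.hne k))) 2)]

theorem lam_one_sq_le
    (hθ0 : S.θ 0 = if √2 * S.α 0 ≤ S.lam 1 then S.lam 1 ^ 2 / (2 * S.α 0 ^ 2) - 1 else 0) :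
    S.lam 1 ^ 2 ≤ 2 * ((1 + S.θ 0) * S.α 0 ^ 2) := by
  have hα := S.α_pos 0
  rw [hθ0]
  split_ifs with h
  · exact le_of_eq (by field_simp; ring)
  · have := pow_lt_pow_left₀ (not_le.1 h) (S.hlampos 0).le two_ne_zero
    rw [mul_pow, sq_sqrt zero_le_two] at this
    linarith

theorem one_div_sq_le_two_mul_one_add_θ_mul_sq {L : ℝ} (hL : 0 < L)
    (hlam : ∀ k, 1 / L ≤ S.lam (k + 1)) (h0 : S.lam 1 ^ 2 ≤ 2 * ((1 + S.θ 0) * S.α 0 ^ 2))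
    (k : ℕ) : (1 / L) ^ 2 ≤ 2 * ((1 + S.θ k) * S.α k ^ 2) := by
  induction k with
  | zero => exact (pow_le_pow_left₀ (by positivity) (hlam 0) 2).trans h0
  | succ k ih =>
    have hθ := S.θ_nonneg (k + 1)
    have hq : 0 ≤ (1 + S.θ (k + 1)) * S.α (k + 1) ^ 2 := by positivity
    rcases le_or_gt (S.α k) (S.lam (k + 1)) with h1 | h
    · linarith [S.two_mul_one_add_θ_mul_sq_le_of_I1 h1]
    · have := pow_le_pow_left₀ (by positivity) ((div_le_div_of_nonneg_right (hlam k)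
        (sqrt_nonneg 2)).trans (S.lam_div_sqrt_two_le_α_succ h)) 2
      rw [div_pow, sq_sqrt zero_le_two] at this
      nlinarith [sq_nonneg (S.α (k + 1))]

theorem one_div_le_α_succ_succ {L : ℝ} (hL : 0 < L) (hlam : ∀ k, 1 / L ≤ S.lam (k + 1))
    (h0 : S.lam 1 ^ 2 ≤ 2 * ((1 + S.θ 0) * S.α 0 ^ 2)) {k : ℕ}
    (h : S.α k / 2 < S.lam (k + 1)) (h1 : S.α (k + 1) ≤ S.lam (k + 2)) :
    1 / L ≤ S.α (k + 2) := by
  refine le_of_pow_le_pow_left₀ two_ne_zero (S.α_pos _).le ?_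
  rw [S.α_succ_sq_of_I1 h1]
  rcases le_or_gt (S.α k) (S.lam (k + 1)) with hk | hk
  · exact (S.one_div_sq_le_two_mul_one_add_θ_mul_sq hL hlam h0 k).trans
      (S.two_mul_one_add_θ_mul_sq_le_of_I1 hk)
  · have := pow_le_pow_left₀ (by positivity) ((hlam k).trans (S.lam_le_α_succ_of_I2 h hk)) 2
    nlinarith [S.θ_nonneg (k + 1), sq_nonneg (S.α (k + 1))]

theorem sqrt_two_div_le_α_succ {L : ℝ} (hL : 0 < L) (hlam : ∀ k, 1 / L ≤ S.lam (k + 1))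
    {k : ℕ} (h : S.lam (k + 1) < S.α k) : √2 / (2 * L) ≤ S.α (k + 1) := by
  have : √2 / (2 * L) = 1 / L / √2 := by
    field_simp
    rw [sq_sqrt zero_le_two]
  rw [this]
  exact (div_le_div_of_nonneg_right (hlam k) (sqrt_nonneg 2)).trans
    (S.lam_div_sqrt_two_le_α_succ h)

theorem two_div_le_α_of_I3 {L : ℝ} (hlam : ∀ k, 1 / L ≤ S.lam (k + 1)) {k : ℕ}
    (h3 : S.lam (k + 1) ≤ S.α k / 2) : 2 / L ≤ S.α k := by
  linarith [hlam k, show 2 / L = 2 * (1 / L) by ring]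

theorem sqrt_two_div_le_α_succ_succ_of_I3 {L : ℝ} (hL : 0 < L)
    (hlam : ∀ k, 1 / L ≤ S.lam (k + 1)) {k : ℕ} (h3 : S.lam (k + 1) ≤ S.α k / 2) :
    √2 / (2 * L) ≤ S.α (k + 2) := by
  have hl := S.hlampos k
  rcases le_or_gt (S.α (k + 1)) (S.lam (k + 2)) with h1 | h
  · exact (S.sqrt_two_div_le_α_succ hL hlam (by linarith)).trans (S.α_le_α_succ_of_I1 h1)
  · exact S.sqrt_two_div_le_α_succ hL hlam h

end AdaBB

open scoped RealInnerProductSpace in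
/-- Lemma 4.2: with the initial ratio `θ_0` chosen adaptively, the AdaBB stepsizes satisfy:
(a) if `i ∈ I_2` then `α_i ≥ 1/L`; (b) if `i+1 ∈ I_3` then `α_i ≥ 2/L` and
`α_i + α_{i+1} ≥ (4+√2)/(2L)`; (c) if `i ∈ I_1 ∪ I_2` and `i+1 ∈ I_1` then `α_{i+1} ≥ 1/L`;
(d) if `i ∈ I_3` then `α_{i-1} + α_i + α_{i+1} ≥ (2+√2)/L`.
Here `I_1 = {k ≥ 1 : λ_k ≥ α_{k-1}}`, `I_2 = {k ≥ 1 : α_{k-1}/2 < λ_k < α_{k-1}}`,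
`I_3 = {k ≥ 1 : λ_k ≤ α_{k-1}/2}`. -/
theorem adabb_est (n : ℕ) (S : AdaBB n)
    (xs : EuclideanSpace ℝ (Fin n)) (hxs : ∀ y, S.f xs ≤ S.f y)
    (R : ℝ) (hR0 : 0 ≤ R)
    (hR2 : R ^ 2 = ‖S.x 0 - xs‖ ^ 2 + S.α 0 ^ 2 * (1 + 2 * S.M 1) * ‖S.f' (S.x 0)‖ ^ 2 +
      max (2 * S.P 1 - 2 * S.α 0) 0 * (S.f (S.x 0) - S.f xs))
    (L : ℝ) (hL : 0 < L)
    (hcoco : ∀ x y : EuclideanSpace ℝ (Fin n), ‖x - xs‖ ≤ R → ‖y - xs‖ ≤ R →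
      (1 / L) * ‖S.f' x - S.f' y‖ ^ 2 ≤ ⟪S.f' x - S.f' y, x - y⟫)
    (hθ0 : S.θ 0 = if Real.sqrt 2 * S.α 0 ≤ S.lam 1
      then S.lam 1 ^ 2 / (2 * S.α 0 ^ 2) - 1 else 0) :
    (∀ i : ℕ, 1 ≤ i → S.α (i - 1) / 2 < S.lam i → S.lam i < S.α (i - 1) → 1 / L ≤ S.α i) ∧
    (∀ i : ℕ, S.lam (i + 1) ≤ S.α i / 2 →
      2 / L ≤ S.α i ∧ (4 + Real.sqrt 2) / (2 * L) ≤ S.α i + S.α (i + 1)) ∧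
    (∀ i : ℕ, 1 ≤ i →
      (S.α (i - 1) ≤ S.lam i ∨ (S.α (i - 1) / 2 < S.lam i ∧ S.lam i < S.α (i - 1))) →
      S.α i ≤ S.lam (i + 1) → 1 / L ≤ S.α (i + 1)) ∧
    (∀ i : ℕ, 1 ≤ i → S.lam i ≤ S.α (i - 1) / 2 →
      (2 + Real.sqrt 2) / L ≤ S.α (i - 1) + S.α i + S.α (i + 1)) := by
  have hball := S.norm_x_sub_le hxs hR0 hR2
  have hlam : ∀ k, 1 / L ≤ S.lam (k + 1) := fun k =>
    S.one_div_le_lam (hcoco _ _ (hball (k + 1)) (hball k))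
  refine ⟨?_, fun i h3 => ?_, ?_, ?_⟩
  · rintro (_ | i) hi h2 h1
    · omega
    · exact (hlam i).trans (S.lam_le_α_succ_of_I2 h2 h1)
  · have hα := S.two_div_le_α_of_I3 hlam h3
    have hα' := S.sqrt_two_div_le_α_succ hL hlam (by linarith [S.hlampos i])
    exact ⟨hα, by linarith [show (4 + √2) / (2 * L) = 2 / L + √2 / (2 * L) by ring]⟩
  · rintro (_ | i) hi hI h1
    · omega
    · simp only [Nat.add_sub_cancel] at hI
      exact S.one_div_le_α_succ_succ hL hlam (S.lam_one_sq_le hθ0)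
        (by rcases hI with h | h <;> linarith [S.α_pos i]) h1
  · rintro (_ | i) hi h3
    · omega
    · simp only [Nat.add_sub_cancel] at h3 ⊢
      have hα' := S.sqrt_two_div_le_α_succ hL hlam (by linarith [S.hlampos i])
      linarith [S.two_div_le_α_of_I3 hlam h3, S.sqrt_two_div_le_α_succ_succ_of_I3 hL hlam h3,
        show (2 + √2) / L = 2 / L + √2 / (2 * L) + √2 / (2 * L) by ring]
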